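/- arXiv:1904.01303 — 2 statements merged into one kernel-verified Lean document; each statement's English description precedes it below -/
import Mathlib

section
/- Let G be a simple graph and S a set of vertices of G (the stations) satisfying criterion C2: for every ordered pair of stations u, v ∈ S there exists a walk in G from u to v all of whose interior vertices lie outside S. Let P ⊆ S be the set of positions of parked robots. Then for any stations r, t, w, r' ∈ S with r, t, w, r' ∉ P (the delivering robot's start station, the task pickup station, the working station, and a free return robot station, respectively, none currently occupied by a parked robot), there exists a walk in G from r to r' passing through t and then through w such that no vertex of the walk lies in P. (Single-task step of Proposition 1: a robot can pick up and deliver its task and return to a free station without colliding with any parked robot.) -/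
namespace SimpleGraph.Walk

variable {V : Type*} {G : SimpleGraph V}

theorem notMem_support_of_interior_notMem {u v : V} (q : G.Walk u v) {S P : Set V}
    (hq : ∀ x ∈ q.support, x ≠ u → x ≠ v → x ∉ S) (hPS : P ⊆ S) (hu : u ∉ P) (hv : v ∉ P) :
    ∀ x ∈ q.support, x ∉ P := by
  intro x hx hxP
  obtain rfl | hxu := eq_or_ne x u
  · exact hu hxP
  obtain rfl | hxv := eq_or_ne x v
  · exact hv hxP
  exact hq x hx hxu hxv (hPS hxP)

theorem notMem_support_append {u v w : V} {P : Set V} {p : G.Walk u v} {p' : G.Walk v w}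
    (hp : ∀ x ∈ p.support, x ∉ P) (hp' : ∀ x ∈ p'.support, x ∉ P) :
    ∀ x ∈ (p.append p').support, x ∉ P := by
  intro x hx
  rcases (mem_support_append_iff p p').mp hx with h | h
  exacts [hp x h, hp' x h]

end SimpleGraph.Walk

/-- Under criterion C2 (between any two stations `u, v ∈ S` there is a walk
all of whose interior vertices lie outside `S`), for any parked-robot set `P ⊆ S` and any
stations `r, t, w, r' ∈ S` none of which lies in `P`, there is a walk from `r` to `r'`
passing through `t` and then through `w` whose vertices all avoid `P`. -/
theorem single_task_collision_free_route {V : Type*} (G : SimpleGraph V)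
    (S : Set V)
    (hC2 : ∀ u ∈ S, ∀ v ∈ S, ∃ q : G.Walk u v,
      ∀ x ∈ q.support, x ≠ u → x ≠ v → x ∉ S)
    (P : Set V) (hPS : P ⊆ S)
    (r t w r' : V) (hr : r ∈ S) (ht : t ∈ S) (hw : w ∈ S) (hr' : r' ∈ S)
    (hrP : r ∉ P) (htP : t ∉ P) (hwP : w ∉ P) (hr'P : r' ∉ P) :
    ∃ (q₁ : G.Walk r t) (q₂ : G.Walk t w) (q₃ : G.Walk w r'),
      ∀ x ∈ (q₁.append (q₂.append q₃)).support, x ∉ P := by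
  obtain ⟨q₁, h₁⟩ := hC2 r hr t ht
  obtain ⟨q₂, h₂⟩ := hC2 t ht w hw
  obtain ⟨q₃, h₃⟩ := hC2 w hw r' hr'
  refine ⟨q₁, q₂, q₃, SimpleGraph.Walk.notMem_support_append ?_
    (SimpleGraph.Walk.notMem_support_append ?_ ?_)⟩
  exacts [q₁.notMem_support_of_interior_notMem h₁ hPS hrP htP,
    q₂.notMem_support_of_interior_notMem h₂ hPS htP hwP,
    q₃.notMem_support_of_interior_notMem h₃ hPS hwP hr'P]
end

section
/- Let G be a simple graph, S a set of vertices of G (the stations), and R ⊆ S a set of robot stations. Assume criterion C2: for every ordered pair of stations u, v ∈ S there exists a walk in G from u to v all of whose interior vertices lie outside S. Let n robots be placed injectively on robot stations, i.e., there is an injective map pos : Fin n → R (criterion C1 guarantees n ≤ |R|). Let a finite sequence of tasks be given, where task i consists of a pickup station tᵢ ∈ S and a working station wᵢ ∈ S, and suppose that at the time each task is executed its pickup station and working station are not occupied by any parked robot (criteria C3–C5). Then there exists a sequence of executions, one task at a time, in which for each task some robot leaves its current robot station, traverses a walk through tᵢ and then wᵢ, and ends at a robot station not occupied by any other robot, such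 that throughout every such walk the moving robot never occupies a vertex occupied by another (parked) robot; after each execution the placement of robots on robot stations remains injective. In particular, the life-long task planning and motion coordination problem is always solvable under criteria C1–C5 (Proposition 1). -/
/-!
A single robot can serve every task and the others never move. By C2 it leaves its robot
station along a walk whose interior avoids all stations, reaches `t i`, then `w i` the same
way, and returns to its own station, which nobody else occupies. The only stations on this
tour are its four endpoints; every other robot is parked on a robot station, which is neither
`t i` nor `w i` (C3–C5) nor the moving robot's home (injectivity), so it is never met.
-/

namespace SimpleGraph.Walk

variable {V : Type*} {G : SimpleGraph V}

def InteriorAvoids {u v : V} (q : G.Walk u v) (S : Set V) : Prop :=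
  ∀ x ∈ q.support, x ≠ u → x ≠ v → x ∉ S

variable {S : Set V} {u a b v x : V}

lemma InteriorAvoids.eq_or_eq {q : G.Walk u v} (hq : q.InteriorAvoids S)
    (hx : x ∈ q.support) (hxS : x ∈ S) : x = u ∨ x = v := by
  by_contra! h
  exact hq x hx h.1 h.2 hxS

lemma InteriorAvoids.mem_support_append_append {q₁ : G.Walk u a} {q₂ : G.Walk a b}
    {q₃ : G.Walk b v} (h₁ : q₁.InteriorAvoids S) (h₂ : q₂.InteriorAvoids S)
    (h₃ : q₃.InteriorAvoids S) (hx : x ∈ (q₁.append (q₂.append q₃)).support) (hxS : x ∈ S) :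
    x = u ∨ x = a ∨ x = b ∨ x = v := by
  simp only [mem_support_append_iff] at hx
  rcases hx with hx | hx | hx
  · rcases h₁.eq_or_eq hx hxS with h | h <;> simp [h]
  · rcases h₂.eq_or_eq hx hxS with h | h <;> simp [h]
  · rcases h₃.eq_or_eq hx hxS with h | h <;> simp [h]

end SimpleGraph.Walk

/-- Proposition 1: Under criteria C1–C5 the life-long task planning and
motion coordination problem is always solvable.  `G` is the warehouse graph, `S` the
stations, `R ⊆ S` the robot stations.  C2: between any two stations there is a walk whose
interior vertices lie outside `S`.  `n` robots are parked injectively on robot stations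
(`pos₀`).  There are `m` tasks with pickup stations `t i ∈ S` and working stations
`w i ∈ S`; by C3–C5 these are never occupied by a parked robot (robots park only in `R`,
and `t i, w i ∉ R`).  Then the tasks can be executed one at a time: for each task some
robot leaves its current robot station, traverses a walk through `t i` then `w i`, ends at
a robot station not occupied by any other robot, never meeting the position of any other
(parked) robot, and after each execution the placement on robot stations stays injective. -/
theorem lifelong_planning_solvable {V : Type*} (G : SimpleGraph V)
    (S R : Set V) (hRS : R ⊆ S)
    (hC2 : ∀ u ∈ S, ∀ v ∈ S, ∃ q : G.Walk u v,
      ∀ x ∈ q.support, x ≠ u → x ≠ v → x ∉ S)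
    (n : ℕ) (hn : 0 < n)
    (pos₀ : Fin n → V) (hpos₀R : ∀ k, pos₀ k ∈ R)
    (hinj₀ : Function.Injective pos₀)
    (m : ℕ) (t w : Fin m → V)
    (htS : ∀ i, t i ∈ S) (hwS : ∀ i, w i ∈ S)
    (htR : ∀ i, t i ∉ R) (hwR : ∀ i, w i ∉ R) :
    ∃ pos : Fin (m + 1) → Fin n → V,
      pos 0 = pos₀ ∧
      (∀ i k, pos i k ∈ R) ∧
      (∀ i, Function.Injective (pos i)) ∧
      (∀ i : Fin m, ∃ k : Fin n,
        (∀ j, j ≠ k → pos i.succ j = pos i.castSucc j) ∧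
        ∃ (q₁ : G.Walk (pos i.castSucc k) (t i)) (q₂ : G.Walk (t i) (w i))
          (q₃ : G.Walk (w i) (pos i.succ k)),
          ∀ x ∈ (q₁.append (q₂.append q₃)).support,
            ∀ j, j ≠ k → x ≠ pos i.castSucc j) := by
  let k : Fin n := ⟨0, hn⟩
  refine ⟨fun _ => pos₀, rfl, fun _ => hpos₀R, fun _ => hinj₀,
    fun i => ⟨k, fun _ _ => rfl, ?_⟩⟩
  have home : pos₀ k ∈ S := hRS (hpos₀R k)
  obtain ⟨q₁, h₁ : q₁.InteriorAvoids S⟩ := hC2 _ home _ (htS i)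
  obtain ⟨q₂, h₂ : q₂.InteriorAvoids S⟩ := hC2 _ (htS i) _ (hwS i)
  obtain ⟨q₃, h₃ : q₃.InteriorAvoids S⟩ := hC2 _ (hwS i) _ home
  refine ⟨q₁, q₂, q₃, fun x hx j hjk hxj => ?_⟩
  subst hxj
  have hjR := hpos₀R j
  rcases h₁.mem_support_append_append h₂ h₃ hx (hRS hjR) with h | h | h | h
  · exact hjk (hinj₀ h)
  · exact htR i (h ▸ hjR)
  · exact hwR i (h ▸ hjR)
  · exact hjk (hinj₀ h)
end
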